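/- arXiv:0711.0191 — 4 statements merged into one kernel-verified Lean document; each statement's English description precedes it below -/
import Mathlib

section
/- For all real numbers a, b, R with 0 < a ≤ b and 0 < R, there exists a constant h₀ > 0 (depending only on a, b, R) such that for all points p, q, r, c in ℍ, if the three distances dist p q, dist q r, dist p r all lie in the interval [a, b], and c is a circumcenter of p, q, r of radius at most R (i.e. dist c p = dist c q = dist c r ≤ R), then all three altitudes of the triangle are at least h₀: Metric.infDist p (L(q,r)) ≥ h₀, Metric.infDist q (L(p,r)) ≥ h₀, and Metric.infDist r (L(p,q)) ≥ h₀. (Paper's Lemma 6: a geodesic triangle in the hyperbolic plane with edge lengths in [a,b] and circumradius at most R has altitudes bounded below by a positive constant h₀(a,b,R).) -/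
open scoped UpperHalfPlane

/-- The geodesic line through `q` and `r` in the hyperbolic plane: the set of points
metrically collinear with `q` and `r`. -/
def geodLine (q r : ℍ) : Set ℍ :=
  {x | dist q x + dist x r = dist q r ∨ dist q r + dist r x = dist q x ∨
       dist x q + dist q r = dist x r}

/-!
The altitude from `p` is at least the least Gromov product of the triangle, because a point of
the geodesic through `q` and `r` lies between them or beyond one of them. The least Gromov product
is positive for three distinct points on a circle: after an isometry moves `p` and `q` onto a
vertical geodesic, any point metrically between them lies on it as well, and a hyperbolic circle
meets a vertical geodesic in at most two points. As `SL(2, ℝ)` acts transitively by isometries, we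
may fix one vertex; the triangles with sides `≥ a` and circumradius `≤ R` then form a compact
family, on which the continuous least Gromov product attains a positive minimum.
-/

open Metric Set
open scoped MatrixGroups

section GromovProduct

variable {X : Type*} [PseudoMetricSpace X]

/-- The Gromov product `(y | z)_x`. -/
noncomputable def gromovProduct (x y z : X) : ℝ := (dist x y + dist x z - dist y z) / 2

noncomputable def minGromovProduct (x y z : X) : ℝ :=
  min (gromovProduct x y z) (min (gromovProduct y x z) (gromovProduct z x y))

lemma gromovProduct_comm (x y z : X) : gromovProduct x y z = gromovProduct x z y := by
  simp only [gromovProduct, dist_comm y z, add_comm (dist x y)]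

lemma minGromovProduct_swap (x y z : X) : minGromovProduct y x z = minGromovProduct x y z := by
  simp only [minGromovProduct, gromovProduct_comm z y x, min_left_comm]

lemma minGromovProduct_rotate (x y z : X) : minGromovProduct z x y = minGromovProduct x y z := by
  simp only [minGromovProduct, gromovProduct_comm x z y, gromovProduct_comm y z x, min_comm,
    min_left_comm]

@[fun_prop]
lemma Continuous.minGromovProduct {Y : Type*} [TopologicalSpace Y] {f g h : Y → X}
    (hf : Continuous f) (hg : Continuous g) (hh : Continuous h) :
    Continuous fun y ↦ minGromovProduct (f y) (g y) (h y) := by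
  unfold _root_.minGromovProduct gromovProduct
  fun_prop

end GromovProduct

lemma minGromovProduct_le_dist_of_mem_geodLine {p q r x : ℍ} (hx : x ∈ geodLine q r) :
    minGromovProduct p q r ≤ dist p x := by
  unfold minGromovProduct
  rcases hx with hx | hx | hx
  · refine min_le_of_left_le ?_
    simp only [gromovProduct]
    linarith [dist_triangle p x q, dist_triangle p x r, dist_comm x q]
  · refine min_le_of_right_le (min_le_of_right_le ?_)
    simp only [gromovProduct]
    linarith [dist_triangle q p x, dist_triangle r x p, dist_comm q r, dist_comm x p, dist_comm q p]
  · refine min_le_of_right_le (min_le_of_left_le ?_)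
    simp only [gromovProduct]
    linarith [dist_triangle x p r, dist_triangle q x p, dist_comm x p, dist_comm x q]

lemma minGromovProduct_le_infDist_geodLine (p q r : ℍ) :
    minGromovProduct p q r ≤ infDist p (geodLine q r) :=
  (le_infDist ⟨q, Or.inl (by simp)⟩).2 fun _ ↦ minGromovProduct_le_dist_of_mem_geodLine

lemma exists_pos_le_minGromovProduct_of_circumradius_le (G : Type*) {X : Type*} [Group G]
    [MetricSpace X] [ProperSpace X] [MulAction G X] [IsIsometricSMul G X]
    [MulAction.IsPretransitive G X]
    (hpos : ∀ p q r c : X, p ≠ q → q ≠ r → p ≠ r → dist c p = dist c q → dist c q = dist c r →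
      0 < minGromovProduct p q r)
    {a : ℝ} (ha : 0 < a) (R : ℝ) :
    ∃ ε > 0, ∀ p q r c : X, a ≤ dist p q → a ≤ dist q r → a ≤ dist p r →
      dist c p = dist c q → dist c q = dist c r → dist c r ≤ R → ε ≤ minGromovProduct p q r := by
  rcases isEmpty_or_nonempty X with _ | ⟨⟨o⟩⟩
  · exact ⟨1, one_pos, fun p ↦ isEmptyElim p⟩
  let K : Set (X × X × X) := {t | a ≤ dist o t.1 ∧ a ≤ dist t.1 t.2.1 ∧ a ≤ dist o t.2.1 ∧
    dist t.2.2 o = dist t.2.2 t.1 ∧ dist t.2.2 t.1 = dist t.2.2 t.2.1 ∧ dist t.2.2 t.2.1 ≤ R}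
  have hK : IsCompact K := by
    refine ((isCompact_closedBall o (2 * R)).prod ((isCompact_closedBall o (2 * R)).prod
      (isCompact_closedBall o R))).of_isClosed_subset ?_ ?_
    · simp only [K, ofPred_and]
      apply_rules [IsClosed.inter, isClosed_le, isClosed_eq] <;> fun_prop
    · rintro ⟨q, r, c⟩ ⟨-, -, -, hco, hcq, hcr⟩
      simp only [mem_prod, mem_closedBall]
      refine ⟨?_, ?_, ?_⟩ <;> linarith [dist_triangle q c o, dist_triangle r c o, dist_comm q c,
        dist_comm r c, dist_comm c o]
  have hcont : Continuous fun t : X × X × X ↦ minGromovProduct o t.1 t.2.1 := by fun_prop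
  obtain ⟨ε, hε, hεK⟩ := hK.exists_forall_le' hcont.continuousOn
    fun ⟨q, r, c⟩ ⟨hq, hqr, hr, hcq, hcr, _⟩ ↦
      hpos o q r c (dist_pos.1 (ha.trans_le hq)) (dist_pos.1 (ha.trans_le hqr))
        (dist_pos.1 (ha.trans_le hr)) hcq hcr
  refine ⟨ε, hε, fun p q r c hpq hqr hpr hcpq hcqr hcr ↦ ?_⟩
  obtain ⟨g, rfl⟩ := MulAction.exists_smul_eq G p o
  have hmem : (g • q, g • r, g • c) ∈ K := by
    simpa only [K, mem_ofPred_eq, dist_smul] using ⟨hpq, hqr, hpr, hcpq, hcqr, hcr⟩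
  simpa only [minGromovProduct, gromovProduct, dist_smul] using hεK _ hmem

namespace UpperHalfPlane

lemma dist_log_im_lt_of_re_ne {z w : ℍ} (h : z.re ≠ w.re) :
    dist (Real.log z.im) (Real.log w.im) < dist z w := by
  have hz := z.im_pos
  have hw := w.im_pos
  calc dist (Real.log z.im) (Real.log w.im) = dist (mk ⟨0, z.im⟩ hz) (mk ⟨0, w.im⟩ hw) :=
        (dist_of_re_eq (z := mk ⟨0, z.im⟩ hz) (w := mk ⟨0, w.im⟩ hw) rfl).symm
    _ < dist z w := by
      rw [← abs_dist, ← abs_dist (a := z), ← Real.cosh_lt_cosh, cosh_dist', cosh_dist']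
      have : 0 < (z.re - w.re) ^ 2 := by positivity [sub_ne_zero.2 h]
      change ((0 - 0) ^ 2 + z.im ^ 2 + w.im ^ 2) / (2 * z.im * w.im) < _
      rw [div_lt_div_iff_of_pos_right (by positivity)]
      linarith

lemma im_mul_im_eq_of_dist_eq {c z w : ℍ} (hre : z.re = w.re) (hne : z ≠ w)
    (h : dist c z = dist c w) : z.im * w.im = (c.re - z.re) ^ 2 + c.im ^ 2 := by
  have him : z.im ≠ w.im := fun him ↦ hne (ext_re_im hre him)
  have hcosh := congrArg Real.cosh h
  rw [cosh_dist', cosh_dist', ← hre, div_eq_div_iff (by positivity) (by positivity)] at hcosh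
  have : (z.im - w.im) * (z.im * w.im - ((c.re - z.re) ^ 2 + c.im ^ 2)) = 0 := by
    have := c.im_pos
    nlinarith
  simpa [sub_ne_zero.2 him, sub_eq_zero] using this

-- `z ↦ -1 / (z - e)`: it sends the boundary point `e` to `∞`, hence geodesics ending at `e` to
-- vertical lines.
noncomputable def boundaryToInfty (e : ℝ) : SL(2, ℝ) :=
  ⟨!![0, -1; 1, -e], by simp [Matrix.det_fin_two]⟩

lemma re_boundaryToInfty_smul (e : ℝ) (z : ℍ) :
    (boundaryToInfty e • z).re = (e - z.re) / ((z.re - e) ^ 2 + z.im ^ 2) := by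
  rw [← coe_re, coe_specialLinearGroup_apply]
  simp [boundaryToInfty, Complex.div_re, Complex.normSq_apply, sub_eq_add_neg, sq]

lemma re_boundaryToInfty_smul_of_sq_eq {m ρ : ℝ} {z : ℍ} (hz : (z.re - m) ^ 2 + z.im ^ 2 = ρ ^ 2) :
    (boundaryToInfty (m - ρ) • z).re = -(2 * ρ)⁻¹ := by
  have hpos : 0 < (z.re - (m - ρ)) ^ 2 + z.im ^ 2 := by have := z.im_pos; positivity
  have hcircle : (z.re - (m - ρ)) ^ 2 + z.im ^ 2 = 2 * ρ * (z.re - (m - ρ)) := by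
    linear_combination hz
  rw [re_boundaryToInfty_smul, hcircle]
  rw [hcircle] at hpos
  have hρ : ρ ≠ 0 := by rintro rfl; simp at hpos
  have hre : z.re - (m - ρ) ≠ 0 := by rintro h; simp [h] at hpos
  field_simp
  ring

lemma exists_re_smul_eq (p q : ℍ) : ∃ g : SL(2, ℝ), (g • p).re = (g • q).re := by
  rcases eq_or_ne p.re q.re with h | h
  · exact ⟨1, by simpa⟩
  set m := (p.re ^ 2 + p.im ^ 2 - q.re ^ 2 - q.im ^ 2) / (2 * (p.re - q.re))
  have hm : (p.re - m) ^ 2 + p.im ^ 2 = (q.re - m) ^ 2 + q.im ^ 2 := by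
    have : m * (2 * (p.re - q.re)) = p.re ^ 2 + p.im ^ 2 - q.re ^ 2 - q.im ^ 2 :=
      div_mul_cancel₀ _ (by simpa [sub_eq_zero] using h)
    linear_combination -this
  set ρ := √((p.re - m) ^ 2 + p.im ^ 2)
  have hp : (p.re - m) ^ 2 + p.im ^ 2 = ρ ^ 2 := (Real.sq_sqrt (by positivity)).symm
  exact ⟨boundaryToInfty (m - ρ), by
    rw [re_boundaryToInfty_smul_of_sq_eq hp, re_boundaryToInfty_smul_of_sq_eq (hm ▸ hp)]⟩

lemma re_eq_of_dist_eq_dist_add_dist {p q r : ℍ} (hpq : p.re = q.re)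
    (h : dist p q = dist p r + dist r q) : r.re = p.re := by
  by_contra hr
  have hpr := dist_log_im_lt_of_re_ne (Ne.symm hr)
  have hrq := dist_log_im_le r q
  rw [dist_of_re_eq hpq] at h
  linarith [dist_triangle (Real.log p.im) (Real.log r.im) (Real.log q.im)]

lemma eq_of_re_eq_of_dist_eq {c p q r : ℍ} (hq : p.re = q.re) (hr : p.re = r.re) (hpq : p ≠ q)
    (hpr : p ≠ r) (hcq : dist c p = dist c q) (hcr : dist c p = dist c r) : q = r := by
  have hK₁ := im_mul_im_eq_of_dist_eq hq hpq hcq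
  have hK₂ := im_mul_im_eq_of_dist_eq hr hpr hcr
  exact ext_re_im (hq.symm.trans hr) (mul_left_cancel₀ p.im_pos.ne' (hK₁.trans hK₂.symm))

lemma dist_lt_dist_add_dist_of_dist_eq {p q r c : ℍ} (hpq : p ≠ q) (hqr : q ≠ r) (hpr : p ≠ r)
    (hcpq : dist c p = dist c q) (hcqr : dist c q = dist c r) :
    dist p q < dist p r + dist r q := by
  obtain ⟨g, hg⟩ := exists_re_smul_eq p q
  refine (dist_triangle p r q).lt_of_ne fun h ↦ hqr (MulAction.injective g ?_)
  rw [← dist_smul g, ← dist_smul g p r, ← dist_smul g r] at h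
  refine eq_of_re_eq_of_dist_eq (c := g • c) hg (re_eq_of_dist_eq_dist_add_dist hg h).symm
    ((MulAction.injective g).ne hpq) ((MulAction.injective g).ne hpr) ?_ ?_ <;>
    simp only [dist_smul, hcpq, hcqr]

lemma minGromovProduct_pos_of_dist_eq {p q r c : ℍ} (hpq : p ≠ q) (hqr : q ≠ r) (hpr : p ≠ r)
    (hcpq : dist c p = dist c q) (hcqr : dist c q = dist c r) : 0 < minGromovProduct p q r := by
  have hp := dist_lt_dist_add_dist_of_dist_eq hqr hpr.symm hpq.symm hcqr (hcpq.trans hcqr).symm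
  have hq := dist_lt_dist_add_dist_of_dist_eq hpr hqr.symm hpq (hcpq.trans hcqr) hcqr.symm
  have hr := dist_lt_dist_add_dist_of_dist_eq hpq hqr hpr hcpq hcqr
  simp only [minGromovProduct, gromovProduct, lt_min_iff]
  refine ⟨?_, ?_, ?_⟩ <;> linarith [dist_comm p q, dist_comm p r, dist_comm q r]

end UpperHalfPlane

theorem thick_triangle_altitude_lower_bound_general (a b R : ℝ) (ha : 0 < a) :
    ∃ h₀ : ℝ, 0 < h₀ ∧ ∀ p q r c : ℍ,
      dist p q ∈ Set.Icc a b → dist q r ∈ Set.Icc a b → dist p r ∈ Set.Icc a b →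
      dist c p = dist c q → dist c q = dist c r → dist c r ≤ R →
      h₀ ≤ Metric.infDist p (geodLine q r) ∧
      h₀ ≤ Metric.infDist q (geodLine p r) ∧
      h₀ ≤ Metric.infDist r (geodLine p q) := by
  obtain ⟨ε, hε, hthick⟩ := exists_pos_le_minGromovProduct_of_circumradius_le SL(2, ℝ)
    (fun _ _ _ _ ↦ UpperHalfPlane.minGromovProduct_pos_of_dist_eq) ha R
  refine ⟨ε, hε, fun p q r c hpq hqr hpr hcpq hcqr hcr ↦ ?_⟩
  have h := hthick p q r c hpq.1 hqr.1 hpr.1 hcpq hcqr hcr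
  refine ⟨?_, ?_, ?_⟩
  · exact h.trans (minGromovProduct_le_infDist_geodLine p q r)
  · exact (minGromovProduct_swap p q r ▸ h).trans (minGromovProduct_le_infDist_geodLine q p r)
  · exact (minGromovProduct_rotate p q r ▸ h).trans (minGromovProduct_le_infDist_geodLine r p q)

/-- A geodesic triangle in the hyperbolic plane with edge lengths in `[a,b]` and
circumradius at most `R` has all three altitudes bounded below by a positive constant
`h₀` depending only on `a`, `b`, `R`. -/
theorem thick_triangle_altitude_lower_bound (a b R : ℝ) (ha : 0 < a) (hab : a ≤ b)
    (hR : 0 < R) :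
    ∃ h₀ : ℝ, 0 < h₀ ∧ ∀ p q r c : ℍ,
      dist p q ∈ Set.Icc a b → dist q r ∈ Set.Icc a b → dist p r ∈ Set.Icc a b →
      dist c p = dist c q → dist c q = dist c r → dist c r ≤ R →
      h₀ ≤ Metric.infDist p (geodLine q r) ∧
      h₀ ≤ Metric.infDist q (geodLine p r) ∧
      h₀ ≤ Metric.infDist r (geodLine p q) :=
  thick_triangle_altitude_lower_bound_general a b R ha
end

section
/- For all points p, q, r in ℍ with q ≠ r and p ≠ q, one has sinh(Metric.infDist p (L(q,r))) · sinh(dist q r) = sinh(Metric.infDist r (L(p,q))) · sinh(dist p q). (This is the distance-only form of the hyperbolic law of sines used repeatedly in the paper's Lemmas 2, 3 and 6: the hyperbolic sine of the distance from a vertex to the opposite line, divided by the hyperbolic sine of the adjacent side through q, equals sin of the angle at q, and hence is the same for the two vertices p and r.) -/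
/-!
Both sides are square roots of the same symmetric function `gramCosh` of the three pairwise
distances. For the left side, move `q` and `r` onto the imaginary axis by an element of
`SL(2, ℝ)`. A metrically collinear triple has `gramCosh = 0`, while for `q`, `r` on the axis
`gramCosh (dist x q) (dist x r) (dist q r) = (re x / im x)² sinh² (dist q r)`; hence the line
through `q` and `r` is the axis. Finally the distance from `p` to the axis has hyperbolic sine
`|re p| / im p`, which closes the computation.
-/

open scoped UpperHalfPlane

open scoped MatrixGroups
open UpperHalfPlane Real Metric

/-- Minus the Gram determinant of three points of the hyperboloid model at pairwise distances
`x`, `y`, `z`. -/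
noncomputable def gramCosh (x y z : ℝ) : ℝ :=
  1 - cosh x ^ 2 - cosh y ^ 2 - cosh z ^ 2 + 2 * cosh x * cosh y * cosh z

lemma gramCosh_rotate (x y z : ℝ) : gramCosh x y z = gramCosh y z x := by
  unfold gramCosh; ring

lemma gramCosh_swap (x y z : ℝ) : gramCosh x y z = gramCosh y x z := by
  unfold gramCosh; ring

lemma gramCosh_add_eq_zero (x y : ℝ) : gramCosh x y (x + y) = 0 := by
  unfold gramCosh
  rw [cosh_add]
  linear_combination (-(sinh y ^ 2)) * sinh_sq x + (1 - cosh x ^ 2) * sinh_sq y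

lemma gramCosh_eq_zero_of_mem_geodLine {q r x : ℍ} (hx : x ∈ geodLine q r) :
    gramCosh (dist x q) (dist x r) (dist q r) = 0 := by
  simp only [geodLine, Set.mem_ofPred_eq, dist_comm q x, dist_comm r x] at hx
  rcases hx with h | h | h
  · rw [← h, gramCosh_add_eq_zero]
  · rw [← h, gramCosh_rotate, add_comm, gramCosh_add_eq_zero]
  · rw [← h, gramCosh_rotate, gramCosh_rotate, gramCosh_swap, gramCosh_add_eq_zero]

lemma Real.dist_add_dist_eq_or (a b t : ℝ) :
    dist a t + dist t b = dist a b ∨ dist a b + dist b t = dist a t ∨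
      dist t a + dist a b = dist t b := by
  simp only [Real.dist_eq]
  grind

def imAxis : Set ℍ := {z | z.re = 0}

@[simp] lemma mem_imAxis {z : ℍ} : z ∈ imAxis ↔ z.re = 0 := Iff.rfl

lemma gramCosh_of_mem_imAxis (p : ℍ) {q r : ℍ} (hq : q ∈ imAxis) (hr : r ∈ imAxis) :
    gramCosh (dist p q) (dist p r) (dist q r) = p.re ^ 2 / p.im ^ 2 * sinh (dist q r) ^ 2 := by
  rw [mem_imAxis] at hq hr
  have := p.im_pos
  have := q.im_pos
  have := r.im_pos
  rw [gramCosh, sinh_sq, cosh_dist', cosh_dist', cosh_dist', hq, hr]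
  field_simp
  ring

lemma geodLine_eq_imAxis {q r : ℍ} (hq : q ∈ imAxis) (hr : r ∈ imAxis) (hqr : q ≠ r) :
    geodLine q r = imAxis := by
  ext x
  constructor
  · intro hx
    have hgram := gramCosh_eq_zero_of_mem_geodLine hx
    rw [gramCosh_of_mem_imAxis x hq hr] at hgram
    have hsinh : sinh (dist q r) ≠ 0 := by simpa using hqr
    simpa [hsinh, x.im_ne_zero] using hgram
  · intro hx
    have hdist : ∀ {z w : ℍ}, z ∈ imAxis → w ∈ imAxis → dist z w = dist (log z.im) (log w.im) :=
      fun hz hw ↦ dist_of_re_eq (hz.trans hw.symm)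
    simpa only [geodLine, Set.mem_ofPred_eq, hdist hq hx, hdist hx hr, hdist hq hr, hdist hr hx,
      hdist hx hq] using Real.dist_add_dist_eq_or _ _ _

lemma cosh_dist_of_mem_imAxis (p : ℍ) {y : ℍ} (hy : y ∈ imAxis) :
    cosh (dist p y) = (‖(p : ℂ)‖ ^ 2 + y.im ^ 2) / (2 * p.im * y.im) := by
  rw [cosh_dist', mem_imAxis.1 hy, Complex.sq_norm, Complex.normSq_apply, coe_re, coe_im]
  ring

lemma cosh_infDist_imAxis (p : ℍ) : cosh (infDist p imAxis) = ‖(p : ℂ)‖ / p.im := by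
  have hp := p.im_pos
  obtain ⟨y₀, hy₀, hy₀_im⟩ : ∃ y₀ : ℍ, y₀ ∈ imAxis ∧ y₀.im = ‖(p : ℂ)‖ :=
    ⟨⟨⟨0, ‖(p : ℂ)‖⟩, norm_pos_iff.2 p.ne_zero⟩, rfl, rfl⟩
  have hcosh₀ : cosh (dist p y₀) = ‖(p : ℂ)‖ / p.im := by
    rw [cosh_dist_of_mem_imAxis p hy₀, hy₀_im]
    field_simp [norm_pos_iff.2 p.ne_zero]
    ring
  have hmin : ∀ y ∈ imAxis, dist p y₀ ≤ dist p y := by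
    intro y hy
    have hcosh : cosh (dist p y₀) ≤ cosh (dist p y) := by
      have := y.im_pos
      rw [hcosh₀, cosh_dist_of_mem_imAxis p hy, div_le_div_iff₀ hp (by positivity)]
      nlinarith [sq_nonneg (y.im - ‖(p : ℂ)‖)]
    simpa [abs_of_nonneg dist_nonneg] using cosh_le_cosh.1 hcosh
  rw [← hcosh₀, le_antisymm (infDist_le_dist_of_mem hy₀) ((le_infDist ⟨y₀, hy₀⟩).2 hmin)]

lemma sinh_infDist_imAxis (p : ℍ) : sinh (infDist p imAxis) = |p.re| / p.im := by
  have hp := p.im_pos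
  rw [← sq_eq_sq₀ (sinh_nonneg_iff.2 infDist_nonneg) (by positivity), sinh_sq,
    cosh_infDist_imAxis, div_pow, div_pow, sq_abs, Complex.sq_norm, Complex.normSq_apply,
    coe_re, coe_im]
  field_simp
  ring

lemma sq_sinh_infDist_geodLine_mul_sinh_of_mem_imAxis (p : ℍ) {q r : ℍ} (hq : q ∈ imAxis)
    (hr : r ∈ imAxis) (hqr : q ≠ r) :
    (sinh (infDist p (geodLine q r)) * sinh (dist q r)) ^ 2 =
      gramCosh (dist p q) (dist p r) (dist q r) := by
  rw [geodLine_eq_imAxis hq hr hqr, mul_pow, sinh_infDist_imAxis, div_pow, sq_abs,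
    gramCosh_of_mem_imAxis p hq hr]

lemma geodLine_smul {G : Type*} [Group G] [MulAction G ℍ] [IsIsometricSMul G ℍ] (g : G)
    (q r : ℍ) : geodLine (g • q) (g • r) = (g • ·) '' geodLine q r := by
  ext x
  rw [← smul_inv_smul g x, Set.image_smul, Set.smul_mem_smul_set_iff]
  simp only [geodLine, Set.mem_ofPred_eq, dist_smul]

lemma sl2_smul_mem_imAxis {g : SL(2, ℝ)} {z : ℍ}
    (hz : (g 0 0 * z.re + g 0 1) * (g 1 0 * z.re + g 1 1) + g 0 0 * g 1 0 * z.im ^ 2 = 0) :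
    g • z ∈ imAxis := by
  rw [mem_imAxis, ← coe_re, coe_specialLinearGroup_apply, Complex.div_re, ← add_div,
    div_eq_zero_iff]
  left
  simp only [Algebra.algebraMap_self, RingHom.id_apply, Complex.add_re, Complex.mul_re,
    Complex.add_im, Complex.mul_im, Complex.ofReal_re, Complex.ofReal_im, coe_re, coe_im]
  linear_combination hz

lemma exists_semicircle_through {q r : ℍ} (h : q.re ≠ r.re) :
    ∃ c R : ℝ, 0 < R ∧ (q.re - c) ^ 2 + q.im ^ 2 = R ^ 2 ∧ (r.re - c) ^ 2 + r.im ^ 2 = R ^ 2 := by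
  set c := (r.re ^ 2 + r.im ^ 2 - q.re ^ 2 - q.im ^ 2) / (2 * (r.re - q.re))
  have hc' : c * (2 * (r.re - q.re)) = r.re ^ 2 + r.im ^ 2 - q.re ^ 2 - q.im ^ 2 :=
    div_mul_cancel₀ _ (by have := sub_ne_zero.2 h.symm; positivity)
  have hR : 0 < (q.re - c) ^ 2 + q.im ^ 2 := by have := q.im_pos; positivity
  refine ⟨c, √((q.re - c) ^ 2 + q.im ^ 2), Real.sqrt_pos.2 hR, (Real.sq_sqrt hR.le).symm, ?_⟩
  rw [Real.sq_sqrt hR.le]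
  linear_combination -hc'

lemma exists_sl2_smul_mem_imAxis (q r : ℍ) : ∃ g : SL(2, ℝ), g • q ∈ imAxis ∧ g • r ∈ imAxis := by
  by_cases h : q.re = r.re
  · refine ⟨⟨!![1, -q.re; 0, 1], by simp⟩, sl2_smul_mem_imAxis ?_, sl2_smul_mem_imAxis ?_⟩ <;>
      simp [h]
  · obtain ⟨c, R, hR, hq, hr⟩ := exists_semicircle_through h
    -- `z ↦ (z - (c + R)) / (2 * R * (z - (c - R)))` sends the ends `c ± R` of the semicircle
    -- to `0` and `∞`, hence the semicircle onto the imaginary axis.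
    refine ⟨⟨!![1 / (2 * R), -(c + R) / (2 * R); 1, R - c], ?_⟩, sl2_smul_mem_imAxis ?_,
      sl2_smul_mem_imAxis ?_⟩
    · rw [Matrix.det_fin_two_of]; field_simp; ring
    all_goals
      simp only [Matrix.of_apply, Matrix.cons_val', Matrix.cons_val_zero, Matrix.cons_val_one,
        Matrix.cons_val_fin_one]
      field_simp
    · linear_combination hq
    · linear_combination hr

lemma sq_sinh_infDist_geodLine_mul_sinh (p : ℍ) {q r : ℍ} (hqr : q ≠ r) :
    (sinh (infDist p (geodLine q r)) * sinh (dist q r)) ^ 2 =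
      gramCosh (dist p q) (dist p r) (dist q r) := by
  obtain ⟨g, hq, hr⟩ := exists_sl2_smul_mem_imAxis q r
  rw [← infDist_image (isometry_smul ℍ g), ← geodLine_smul, ← dist_smul g q r,
    ← dist_smul g p q, ← dist_smul g p r]
  exact sq_sinh_infDist_geodLine_mul_sinh_of_mem_imAxis _ hq hr ((MulAction.injective g).ne hqr)

/-- Distance-only form of the hyperbolic law of sines: the hyperbolic sine of the altitude
from `p` over the side `qr` times the hyperbolic sine of `dist q r` equals the hyperbolic
sine of the altitude from `r` over the side `pq` times the hyperbolic sine of `dist p q`. -/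
theorem hyperbolic_law_of_sines (p q r : ℍ) (hqr : q ≠ r) (hpq : p ≠ q) :
    Real.sinh (Metric.infDist p (geodLine q r)) * Real.sinh (dist q r) =
      Real.sinh (Metric.infDist r (geodLine p q)) * Real.sinh (dist p q) := by
  have hnonneg {x : ℍ} {s : Set ℍ} {y z : ℍ} : 0 ≤ sinh (infDist x s) * sinh (dist y z) :=
    mul_nonneg (sinh_nonneg_iff.2 infDist_nonneg) (sinh_nonneg_iff.2 dist_nonneg)
  rw [← sq_eq_sq₀ hnonneg hnonneg, sq_sinh_infDist_geodLine_mul_sinh p hqr,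
    sq_sinh_infDist_geodLine_mul_sinh r hpq, dist_comm r p, dist_comm r q, gramCosh_rotate]
end

section
/- Let r, R > 0, let c ∈ ℍ, and let s be a finite set of points contained in the closed ball of radius R centered at c such that any two distinct points of s are at distance at least 2r from each other. Then the balls of radius r centered at the points of s are pairwise disjoint and contained in the ball of radius R + r centered at c, and consequently the cardinality of s satisfies (s.card : ℝ) ≤ (cosh(R + r) − 1)/(cosh r − 1). (This is the packing argument at the heart of the paper's Lemma 5, in the hyperbolic plane: at most ⌊vol(B(R+r))/vol(B(r))⌋ mutually disjoint r-balls fit in an (R+r)-ball.) -/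
/-!
A hyperbolic ball `B(z, t)` is the Euclidean disk of centre `z.re + i z.im cosh t` and radius
`z.im sinh t`. Integrating `y⁻²` over it slice by slice gives the area `2π (cosh t - 1)`,
independently of `z`. The bound then compares the total area of the disjoint `r`-balls about
the points of `s` with the area of `B(c, R + r)`, which contains them all.
-/

open Real Set MeasureTheory Metric
open scoped ENNReal NNReal UpperHalfPlane

attribute [local fun_prop] continuous_arcsin continuous_arctan

section Primitive

variable {b ρ k y : ℝ}

lemma hasDerivAt_sqrt_sq_sub_sq (hd : 0 < ρ ^ 2 - (y - b) ^ 2) :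
    HasDerivAt (fun y ↦ √(ρ ^ 2 - (y - b) ^ 2)) (-(y - b) / √(ρ ^ 2 - (y - b) ^ 2)) y := by
  have h : HasDerivAt (fun y ↦ ρ ^ 2 - (y - b) ^ 2) (-(2 * (y - b))) y := by
    simpa using (((hasDerivAt_id' y).sub_const b).fun_pow 2).const_sub (ρ ^ 2)
  convert h.sqrt hd.ne' using 1
  field_simp

lemma hasDerivAt_arcsin_sub_div (hρ : 0 < ρ) (hd : 0 < ρ ^ 2 - (y - b) ^ 2) :
    HasDerivAt (fun y ↦ arcsin ((y - b) / ρ)) (1 / √(ρ ^ 2 - (y - b) ^ 2)) y := by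
  have hlt : ((y - b) / ρ) ^ 2 < 1 := by
    rw [div_pow, div_lt_one (by positivity)]; linarith
  refine ((hasDerivAt_arcsin (by nlinarith [sq_nonneg ((y - b) / ρ + 1)])
    (by nlinarith [sq_nonneg ((y - b) / ρ - 1)])).comp y
    (((hasDerivAt_id' y).sub_const b).div_const ρ)).congr_deriv ?_
  rw [show 1 - ((y - b) / ρ) ^ 2 = (ρ ^ 2 - (y - b) ^ 2) / ρ ^ 2 by field_simp,
    sqrt_div' _ (sq_nonneg ρ), sqrt_sq hρ.le]
  field_simp

lemma hasDerivAt_arctan_halfAngle (hk : 0 < k) (hρ : 0 < ρ) (hb2 : b ^ 2 = k ^ 2 + ρ ^ 2)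
    (hy : y ≠ 0) (hd : 0 < ρ ^ 2 - (y - b) ^ 2) :
    HasDerivAt (fun y ↦ arctan ((b * (y - b) / (ρ + √(ρ ^ 2 - (y - b) ^ 2)) + ρ) / k))
      (k / (2 * √(ρ ^ 2 - (y - b) ^ 2) * y)) y := by
  have hv := ((((((hasDerivAt_id' y).sub_const b).const_mul b).fun_div
    ((hasDerivAt_sqrt_sq_sub_sq hd).const_add ρ) (by positivity)).add_const ρ).div_const k).arctan
  refine hv.congr_deriv ?_
  set g := √(ρ ^ 2 - (y - b) ^ 2)
  have hg : g ^ 2 = ρ ^ 2 - (y - b) ^ 2 := sq_sqrt hd.le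
  have hg0 : 0 < g := sqrt_pos.2 hd
  have hb : b ≠ 0 := by rintro rfl; nlinarith
  have hv2 : 1 + ((b * (y - b) / (ρ + g) + ρ) / k) ^ 2 = 2 * b * ρ * y / ((ρ + g) * k ^ 2) := by
    field_simp
    linear_combination (-(ρ + g) ^ 2) * hb2 + b ^ 2 * hg
  rw [hv2]
  field_simp
  linear_combination hg

/-- Substituting `y - b = ρ sin θ`, the arctan argument is `(b tan (θ / 2) + ρ) / k`; in this
half-angle form the primitive stays continuous at the endpoints `y = b ± ρ`. -/
noncomputable def invSqChordPrimitive (b ρ k y : ℝ) : ℝ :=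
  2 * (-arcsin ((y - b) / ρ) +
    2 * b / k * arctan ((b * (y - b) / (ρ + √(ρ ^ 2 - (y - b) ^ 2)) + ρ) / k) -
    √(ρ ^ 2 - (y - b) ^ 2) / y)

lemma hasDerivAt_invSqChordPrimitive (hk : 0 < k) (hρ : 0 < ρ) (hb2 : b ^ 2 = k ^ 2 + ρ ^ 2)
    (hy : y ≠ 0) (hd : 0 < ρ ^ 2 - (y - b) ^ 2) :
    HasDerivAt (invSqChordPrimitive b ρ k) ((y ^ 2)⁻¹ * (2 * √(ρ ^ 2 - (y - b) ^ 2))) y := by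
  have h := ((((hasDerivAt_arcsin_sub_div hρ hd).neg.add
    ((hasDerivAt_arctan_halfAngle hk hρ hb2 hy hd).const_mul (2 * b / k))).sub
    ((hasDerivAt_sqrt_sq_sub_sq hd).div (hasDerivAt_id' y) hy)).const_mul 2)
  refine h.congr_deriv ?_
  have hg0 : 0 < √(ρ ^ 2 - (y - b) ^ 2) := sqrt_pos.2 hd
  field_simp
  ring

lemma arctan_add_arctan_of_mul_eq_one {x y : ℝ} (hx : 0 < x) (hxy : x * y = 1) :
    arctan x + arctan y = π / 2 := by
  rw [eq_inv_of_mul_eq_one_right hxy, arctan_inv_of_pos hx]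
  ring

lemma intervalIntegrable_inv_sq_mul_chord (hρ : 0 < ρ) (hρb : ρ < b) :
    IntervalIntegrable (fun y ↦ (y ^ 2)⁻¹ * (2 * √(ρ ^ 2 - (y - b) ^ 2))) volume
      (b - ρ) (b + ρ) := by
  have hne : ∀ y ∈ Icc (b - ρ) (b + ρ), y ^ 2 ≠ 0 := fun y hy ↦
    pow_ne_zero 2 (by linarith [hy.1])
  apply ContinuousOn.intervalIntegrable
  rw [uIcc_of_le (by linarith)]
  fun_prop (disch := assumption)

lemma integral_inv_sq_mul_chord (hk : 0 < k) (hρ : 0 < ρ) (hb : 0 < b)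
    (hb2 : b ^ 2 = k ^ 2 + ρ ^ 2) :
    ∫ y in (b - ρ)..(b + ρ), (y ^ 2)⁻¹ * (2 * √(ρ ^ 2 - (y - b) ^ 2)) = 2 * π * (b - k) / k := by
  have hρb : ρ < b := by nlinarith
  have hne : ∀ y ∈ Icc (b - ρ) (b + ρ), y ≠ 0 := fun y hy ↦ by linarith [hy.1]
  have hcont : ContinuousOn (invSqChordPrimitive b ρ k) (Icc (b - ρ) (b + ρ)) := by
    unfold invSqChordPrimitive
    fun_prop (disch := first | assumption | (intros; positivity))
  rw [intervalIntegral.integral_eq_sub_of_hasDeriv_right_of_le (by linarith) hcont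
    (fun y hy ↦ (hasDerivAt_invSqChordPrimitive hk hρ hb2 (by linarith [hy.1])
      (by nlinarith [hy.1, hy.2])).hasDerivWithinAt) (intervalIntegrable_inv_sq_mul_chord hρ hρb)]
  have harctan := arctan_add_arctan_of_mul_eq_one (x := (b + ρ) / k) (y := (b - ρ) / k)
    (by positivity) (by field_simp; linear_combination hb2)
  simp only [invSqChordPrimitive, add_sub_cancel_left, sub_sub_cancel_left, neg_sq, sub_self,
    sqrt_zero, add_zero, zero_div, sub_zero, div_self hρ.ne', neg_div_self hρ.ne', arcsin_one,
    arcsin_neg_one]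
  rw [show (b * ρ / ρ + ρ) / k = (b + ρ) / k by field_simp,
    show (b * -ρ / ρ + ρ) / k = -((b - ρ) / k) by field_simp; ring, arctan_neg]
  field_simp
  linear_combination 4 * b * harctan

end Primitive

lemma setLIntegral_comp_im {S : Set ℂ} (hS : MeasurableSet S) {g : ℝ → ℝ≥0∞} (hg : Measurable g) :
    ∫⁻ z in S, g z.im = ∫⁻ y, g y * volume {x : ℝ | (⟨x, y⟩ : ℂ) ∈ S} := by
  have hslice (y : ℝ) : MeasurableSet {x : ℝ | (⟨x, y⟩ : ℂ) ∈ S} :=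
    hS.preimage (Complex.measurableEquivRealProd.symm.measurable.comp measurable_prodMk_right)
  rw [← lintegral_indicator hS, ← Complex.volume_preserving_equiv_real_prod.symm.lintegral_comp_emb
    Complex.measurableEquivRealProd.symm.measurableEmbedding, Measure.volume_eq_prod,
    lintegral_prod_symm]
  · refine lintegral_congr fun y ↦ ?_
    rw [← lintegral_indicator_const (hslice y)]
    rfl
  · exact ((hg.comp Complex.measurable_im).indicator hS).comp_aemeasurable
      (Complex.measurableEquivRealProd.symm.measurable.aemeasurable)

lemma setOf_mk_mem_ball (a : ℂ) {ρ : ℝ} (hρ : 0 < ρ) (y : ℝ) :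
    {x : ℝ | (⟨x, y⟩ : ℂ) ∈ ball a ρ} =
      Ioo (a.re - √(ρ ^ 2 - (y - a.im) ^ 2)) (a.re + √(ρ ^ 2 - (y - a.im) ^ 2)) := by
  ext x
  rw [mem_ofPred_eq, mem_ball, Complex.dist_eq_re_im, sqrt_lt' hρ, mem_Ioo,
    ← sub_lt_iff_lt_add', sub_lt_comm, ← abs_sub_lt_iff, lt_sqrt (abs_nonneg _), sq_abs,
    lt_sub_iff_add_lt, sub_sq_comm]

lemma volume_setOf_mk_mem_ball (a : ℂ) {ρ : ℝ} (hρ : 0 < ρ) (y : ℝ) :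
    volume {x : ℝ | (⟨x, y⟩ : ℂ) ∈ ball a ρ} = ENNReal.ofReal (2 * √(ρ ^ 2 - (y - a.im) ^ 2)) := by
  rw [setOf_mk_mem_ball a hρ, Real.volume_Ioo]
  ring_nf

lemma setLIntegral_ball_inv_im_sq {a : ℂ} {ρ k : ℝ} (hk : 0 < k) (hρ : 0 < ρ) (ha : 0 < a.im)
    (h : a.im ^ 2 = k ^ 2 + ρ ^ 2) :
    ∫⁻ z in ball a ρ, ENNReal.ofReal (z.im ^ 2)⁻¹ = ENNReal.ofReal (2 * π * (a.im - k) / k) := by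
  have hρb : ρ < a.im := by nlinarith
  set f : ℝ → ℝ := fun y ↦ (y ^ 2)⁻¹ * (2 * √(ρ ^ 2 - (y - a.im) ^ 2))
  have hsupp : (fun y ↦ ENNReal.ofReal (f y)).support ⊆ Ioc (a.im - ρ) (a.im + ρ) := by
    intro y hy
    by_contra hy'
    have hd : ρ ^ 2 - (y - a.im) ^ 2 ≤ 0 := by
      rw [mem_Ioc, not_and_or, not_lt, not_le] at hy'
      rcases hy' with hy' | hy' <;> nlinarith
    simp [f, sqrt_eq_zero_of_nonpos hd] at hy
  rw [setLIntegral_comp_im (g := fun y ↦ ENNReal.ofReal (y ^ 2)⁻¹) isOpen_ball.measurableSet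
    (by fun_prop)]
  simp_rw [volume_setOf_mk_mem_ball a hρ, ← ENNReal.ofReal_mul (inv_nonneg.2 (sq_nonneg _))]
  rw [← setLIntegral_eq_of_support_subset hsupp, ← ofReal_integral_eq_lintegral_ofReal
    ((intervalIntegrable_iff_integrableOn_Ioc_of_le (by linarith)).1
      (intervalIntegrable_inv_sq_mul_chord hρ hρb))
    (.of_forall fun y ↦ by positivity), ← intervalIntegral.integral_of_le (by linarith),
    integral_inv_sq_mul_chord hk hρ ha h]

theorem UpperHalfPlane.volume_ball (z : ℍ) {t : ℝ} (ht : 0 < t) :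
    volume (ball z t) = ENNReal.ofReal (2 * π * (cosh t - 1)) := by
  have hdensity (y : ℝ) : (((1 / ‖y‖₊) ^ 2 : ℝ≥0) : ℝ≥0∞) = ENNReal.ofReal (y ^ 2)⁻¹ := by
    rw [← ENNReal.ofReal_coe_nnreal]
    push_cast
    simp [sq_abs]
  have him : (z.center t : ℂ).im = z.im * cosh t := z.center_im t
  simp_rw [volume_eq_lintegral, image_coe_ball, hdensity]
  rw [setLIntegral_ball_inv_im_sq z.im_pos (mul_pos z.im_pos (sinh_pos_iff.2 ht))
    (him ▸ mul_pos z.im_pos (cosh_pos t))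
    (by rw [him]; linear_combination z.im ^ 2 * cosh_sq t), him]
  congr 1
  field_simp

theorem card_mul_le_measure_of_pairwise_disjoint {ι X : Type*} [MeasurableSpace X]
    (μ : Measure X) {s : Finset ι} {f : ι → Set X} {T : Set X} {m : ℝ≥0∞}
    (hf : ∀ i ∈ s, MeasurableSet (f i)) (hdisj : ∀ i ∈ s, ∀ j ∈ s, i ≠ j → Disjoint (f i) (f j))
    (hsub : ∀ i ∈ s, f i ⊆ T) (hm : ∀ i ∈ s, μ (f i) = m) :
    s.card * m ≤ μ T :=
  calc s.card * m = ∑ i ∈ s, μ (f i) := by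
        rw [Finset.sum_congr rfl hm, Finset.sum_const, nsmul_eq_mul]
    _ = μ (⋃ i ∈ s, f i) := (measure_biUnion_finset (fun i hi j hj ↦ hdisj i hi j hj) hf).symm
    _ ≤ μ T := measure_mono (iUnion₂_subset hsub)

theorem hyperbolic_ball_packing_general (r R : ℝ) (hr : 0 < r) (c : ℍ)
    (s : Finset ℍ) (hball : ∀ p ∈ s, p ∈ Metric.closedBall c R)
    (hsep : ∀ p ∈ s, ∀ q ∈ s, p ≠ q → 2 * r ≤ dist p q) :
    (∀ p ∈ s, ∀ q ∈ s, p ≠ q → Disjoint (Metric.ball p r) (Metric.ball q r)) ∧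
    (∀ p ∈ s, Metric.ball p r ⊆ Metric.ball c (R + r)) ∧
    (s.card : ℝ) ≤ (Real.cosh (R + r) - 1) / (Real.cosh r - 1) := by
  have hdisj : ∀ p ∈ s, ∀ q ∈ s, p ≠ q → Disjoint (ball p r) (ball q r) :=
    fun p hp q hq hpq ↦ ball_disjoint_ball (by linarith [hsep p hp q hq hpq])
  have hsub : ∀ p ∈ s, ball p r ⊆ ball c (R + r) :=
    fun p hp ↦ ball_subset_ball' (by linarith [mem_closedBall.1 (hball p hp)])
  refine ⟨hdisj, hsub, ?_⟩
  have hcosh : 0 < cosh r - 1 := sub_pos.2 (one_lt_cosh.2 hr.ne')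
  rcases s.eq_empty_or_nonempty with rfl | ⟨p, hp⟩
  · simpa using div_nonneg (sub_nonneg.2 (one_le_cosh _)) hcosh.le
  have hRr : 0 < R + r := by linarith [dist_nonneg.trans (mem_closedBall.1 (hball p hp))]
  have hcard := card_mul_le_measure_of_pairwise_disjoint volume (fun _ _ ↦ measurableSet_ball)
    hdisj hsub (fun p _ ↦ UpperHalfPlane.volume_ball p hr)
  rw [UpperHalfPlane.volume_ball c hRr, ← ENNReal.ofReal_natCast,
    ← ENNReal.ofReal_mul (Nat.cast_nonneg _), ENNReal.ofReal_le_ofReal_iff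
    (mul_nonneg (by positivity) (sub_nonneg.2 (one_le_cosh _)))] at hcard
  rw [le_div_iff₀ hcosh]
  nlinarith [pi_pos]

/-- Hyperbolic packing: if a finite set `s` of points of the hyperbolic plane is contained
in the closed ball of radius `R` about `c` and any two distinct points of `s` are at
distance at least `2r`, then the `r`-balls about the points of `s` are pairwise disjoint
and contained in the ball of radius `R + r` about `c`, and hence
`s.card ≤ (cosh(R+r) − 1)/(cosh r − 1)` (the ratio of hyperbolic areas of the balls). -/
theorem hyperbolic_ball_packing (r R : ℝ) (hr : 0 < r) (hR : 0 < R) (c : ℍ)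
    (s : Finset ℍ) (hball : ∀ p ∈ s, p ∈ Metric.closedBall c R)
    (hsep : ∀ p ∈ s, ∀ q ∈ s, p ≠ q → 2 * r ≤ dist p q) :
    (∀ p ∈ s, ∀ q ∈ s, p ≠ q → Disjoint (Metric.ball p r) (Metric.ball q r)) ∧
    (∀ p ∈ s, Metric.ball p r ⊆ Metric.ball c (R + r)) ∧
    (s.card : ℝ) ≤ (Real.cosh (R + r) - 1) / (Real.cosh r - 1) :=
  hyperbolic_ball_packing_general r R hr c s hball hsep
end

section
/- Let v₁, v₂ be distinct points of ℍ and let b > 0. Then the hyperbolic area of the set of points p with dist p v₁ ≤ b that lie within distance d of the geodesic line through v₁ and v₂ tends to 0 as d tends to 0 from above; that is, Tendsto (fun d => μ {p : ℍ | dist p v₁ ≤ b ∧ Metric.infDist p (L(v₁,v₂)) ≤ d}) (nhdsWithin 0 (Set.Ioi 0)) (nhds 0). (This is the two-dimensional content of the paper's Lemma 4: the volume of the bad region of a simplex — here, the set of points forming a flat triangle with a fixed edge — tends to 0 as the flatness parameter d tends to 0.) -/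
open scoped UpperHalfPlane
open MeasureTheory Filter

noncomputable instance : MeasurableSpace ℍ := borel ℍ

instance : BorelSpace ℍ := ⟨rfl⟩

/-- The hyperbolic area measure on the upper half-plane: the measure with density
`(Im z)⁻²` with respect to two-dimensional Lebesgue measure, pulled back from ℂ. -/
noncomputable def hypArea : Measure ℍ :=
  Measure.comap (fun z : ℍ => (z : ℂ))
    ((volume : Measure ℂ).withDensity fun z : ℂ => ENNReal.ofReal ((z.im ^ 2)⁻¹))

/-- The (Euclidean) equation of the circle or vertical line through `q` and `r`:
its zero set contains (the image of) the geodesic through `q` and `r`. -/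
noncomputable def lineE (q r : ℍ) (z : ℂ) : ℝ :=
  (q.re - r.re) * (z.re ^ 2 + z.im ^ 2)
    - (q.re ^ 2 + q.im ^ 2 - (r.re ^ 2 + r.im ^ 2)) * z.re
    + ((q.re ^ 2 + q.im ^ 2) * r.re - (r.re ^ 2 + r.im ^ 2) * q.re)

/-- If `d1 + d2 = d3` then a symmetric expression in the hyperbolic cosines vanishes. -/
lemma cosh_sym_sum {d1 d2 d3 : ℝ} (h : d1 + d2 = d3) :
    Real.cosh d1 ^ 2 + Real.cosh d2 ^ 2 + Real.cosh d3 ^ 2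
      - 2 * (Real.cosh d1 * Real.cosh d2 * Real.cosh d3) - 1 = 0 := by
  subst h
  have h1 := Real.sinh_sq d1
  have h2 := Real.sinh_sq d2
  rw [Real.cosh_add]
  nlinarith [h1, h2]

/-- Any point metrically collinear with `q` and `r` lies on the Euclidean circle (or vertical
line) through `q` and `r` orthogonal to the real axis. -/
lemma lineE_eq_zero_of_mem {q r p : ℍ} (hp : p ∈ geodLine q r) : lineE q r (p : ℂ) = 0 := by
  have hG : Real.cosh (dist q p) ^ 2 + Real.cosh (dist p r) ^ 2 + Real.cosh (dist q r) ^ 2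
      - 2 * (Real.cosh (dist q p) * Real.cosh (dist p r) * Real.cosh (dist q r)) - 1 = 0 := by
    rcases hp with h | h | h
    · have := cosh_sym_sum h
      ring_nf at this ⊢; linarith
    · have := cosh_sym_sum h
      rw [dist_comm r p] at this
      ring_nf at this ⊢; linarith
    · have := cosh_sym_sum h
      rw [dist_comm p q] at this
      ring_nf at this ⊢; linarith
  rw [UpperHalfPlane.cosh_dist' q p, UpperHalfPlane.cosh_dist' p r,
    UpperHalfPlane.cosh_dist' q r] at hG
  have hy : (0:ℝ) < p.im := p.im_pos
  have hyq : (0:ℝ) < q.im := q.im_pos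
  have hyr : (0:ℝ) < r.im := r.im_pos
  set A := ((q.re - p.re) ^ 2 + q.im ^ 2 + p.im ^ 2) / (2 * q.im * p.im) with hA
  set B := ((p.re - r.re) ^ 2 + p.im ^ 2 + r.im ^ 2) / (2 * p.im * r.im) with hB
  set C := ((q.re - r.re) ^ 2 + q.im ^ 2 + r.im ^ 2) / (2 * q.im * r.im) with hC
  have key : lineE q r (p : ℂ) ^ 2 = -(4 * p.im ^ 2 * q.im ^ 2 * r.im ^ 2) *
      (A ^ 2 + B ^ 2 + C ^ 2 - 2 * (A * B * C) - 1) := by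
    rw [hA, hB, hC]
    simp only [lineE, UpperHalfPlane.coe_re, UpperHalfPlane.coe_im]
    field_simp
    ring
  rw [hG, mul_zero] at key
  exact pow_eq_zero_iff two_ne_zero |>.mp key

/-- The zero set of `lineE q r` (a circle or a vertical line) is Lebesgue-null in `ℂ`. -/
lemma volume_lineE_zero (q r : ℍ) (hqr : q ≠ r) :
    volume {z : ℂ | lineE q r z = 0} = 0 := by
  by_cases hre : q.re = r.re
  · -- vertical line case
    have him : q.im ≠ r.im := by
      intro him
      exact hqr (UpperHalfPlane.ext (Complex.ext hre him))
    have h2 : q.im ^ 2 - r.im ^ 2 ≠ 0 := by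
      intro h
      have h3 : (q.im - r.im) * (q.im + r.im) = 0 := by linear_combination h
      rcases mul_eq_zero.mp h3 with h4 | h4
      · exact him (by linarith)
      · have := q.im_pos; have := r.im_pos; linarith
    have hsub : {z : ℂ | lineE q r z = 0} ⊆ {z : ℂ | z.re = q.re} := by
      intro z hz
      simp only [Set.mem_setOf_eq, lineE] at hz ⊢
      have h5 : (q.im ^ 2 - r.im ^ 2) * (q.re - z.re) = 0 := by
        rw [hre] at hz ⊢
        linear_combination hz
      rcases mul_eq_zero.mp h5 with h6 | h6
      · exact absurd h6 h2
      · linarith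
    refine measure_mono_null hsub ?_
    have hset : {z : ℂ | z.re = q.re}
        = Complex.measurableEquivRealProd ⁻¹' ({q.re} ×ˢ Set.univ) := by
      ext z
      simp [Complex.measurableEquivRealProd_apply, eq_comm]
    rw [hset, Complex.volume_preserving_equiv_real_prod.measure_preimage
      ((measurableSet_singleton _).prod MeasurableSet.univ).nullMeasurableSet]
    rw [show (volume : Measure (ℝ × ℝ)) = (volume : Measure ℝ).prod volume from rfl]
    rw [Measure.prod_prod]
    simp
  · -- circle case
    have hΔ : q.re - r.re ≠ 0 := sub_ne_zero.mpr hre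
    set c : ℝ := (q.re ^ 2 + q.im ^ 2 - (r.re ^ 2 + r.im ^ 2)) / (2 * (q.re - r.re)) with hc
    have hcΔ : 2 * c * (q.re - r.re) = q.re ^ 2 + q.im ^ 2 - (r.re ^ 2 + r.im ^ 2) := by
      rw [hc]; field_simp
    have hq0 : lineE q r (q : ℂ) = 0 := by
      simp only [lineE, UpperHalfPlane.coe_re, UpperHalfPlane.coe_im]
      ring
    have hsub : {z : ℂ | lineE q r z = 0} ⊆ Metric.sphere (c : ℂ) (dist (q : ℂ) (c : ℂ)) := by
      intro z hz
      simp only [Set.mem_setOf_eq] at hz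
      simp only [Metric.mem_sphere]
      have e1 : ∀ w : ℂ, dist w (c : ℂ) ^ 2 = (w.re - c) ^ 2 + w.im ^ 2 := by
        intro w
        rw [Complex.dist_eq, Complex.sq_norm, Complex.normSq_apply]
        simp [Complex.sub_re, Complex.sub_im]
        ring
      have key : (q.re - r.re) * (((z.re - c) ^ 2 + z.im ^ 2)
          - (((q : ℂ).re - c) ^ 2 + (q : ℂ).im ^ 2)) = 0 := by
        simp only [lineE, UpperHalfPlane.coe_re, UpperHalfPlane.coe_im] at hz hq0 ⊢
        linear_combination hz - hq0 - (z.re - q.re) * hcΔ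
      have h7 : dist z (c : ℂ) ^ 2 = dist (q : ℂ) (c : ℂ) ^ 2 := by
        rw [e1 z, e1 (q : ℂ)]
        rcases mul_eq_zero.mp key with h8 | h8
        · exact absurd h8 hΔ
        · linarith
      exact (sq_eq_sq₀ dist_nonneg dist_nonneg).mp h7
    exact measure_mono_null hsub (Measure.addHaar_sphere _ _ _)

lemma coe_measurableEmbedding : MeasurableEmbedding (fun z : ℍ => (z : ℂ)) :=
  UpperHalfPlane.isOpenEmbedding_coe.isEmbedding.measurableEmbedding
    UpperHalfPlane.isOpenEmbedding_coe.isOpen_range.measurableSet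

lemma hypArea_apply (s : Set ℍ) :
    hypArea s = ((volume : Measure ℂ).withDensity
      fun z : ℂ => ENNReal.ofReal ((z.im ^ 2)⁻¹)) ((fun z : ℍ => (z : ℂ)) '' s) :=
  coe_measurableEmbedding.comap_apply _ _

/-- The geodesic line is a null set for the hyperbolic area measure. -/
lemma hypArea_geodLine_zero (q r : ℍ) (hqr : q ≠ r) : hypArea (geodLine q r) = 0 := by
  rw [hypArea_apply]
  refine (withDensity_absolutelyContinuous volume _) ?_
  refine measure_mono_null ?_ (volume_lineE_zero q r hqr)
  rintro - ⟨p, hp, rfl⟩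
  exact lineE_eq_zero_of_mem hp

/-- Hyperbolic balls have finite hyperbolic area. -/
lemma hypArea_ball_lt_top (v : ℍ) (b : ℝ) : hypArea {p : ℍ | dist p v ≤ b} < ⊤ := by
  set c : ℝ := v.im / Real.exp b with hc
  have hcpos : 0 < c := div_pos v.im_pos (Real.exp_pos b)
  set R : ℝ := v.im * (Real.exp b - 1) with hR
  set K : Set ℂ := Metric.closedBall (v : ℂ) R ∩ {z : ℂ | c ≤ z.im} with hK
  have hKm : MeasurableSet K :=
    measurableSet_closedBall.inter (measurableSet_le measurable_const Complex.measurable_im)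
  have himg : (fun z : ℍ => (z : ℂ)) '' {p : ℍ | dist p v ≤ b} ⊆ K := by
    rintro - ⟨p, hp, rfl⟩
    simp only [Set.mem_setOf_eq] at hp
    constructor
    · rw [Metric.mem_closedBall]
      refine (UpperHalfPlane.dist_coe_le p v).trans ?_
      rw [hR]
      have := Real.exp_le_exp.mpr hp
      nlinarith [v.im_pos]
    · simp only [Set.mem_setOf_eq, UpperHalfPlane.coe_im]
      refine le_trans ?_ (UpperHalfPlane.im_div_exp_dist_le v p)
      rw [hc, UpperHalfPlane.dist_comm v p]
      exact div_le_div_of_nonneg_left v.im_pos.le (Real.exp_pos _) (Real.exp_le_exp.mpr hp)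
  rw [hypArea_apply]
  refine lt_of_le_of_lt (measure_mono himg) ?_
  rw [withDensity_apply _ hKm]
  calc ∫⁻ z in K, ENNReal.ofReal ((z.im ^ 2)⁻¹) ∂volume
      ≤ ∫⁻ _ in K, ENNReal.ofReal ((c ^ 2)⁻¹) ∂volume := by
        refine setLIntegral_mono' hKm fun z hz => ?_
        refine ENNReal.ofReal_le_ofReal ?_
        have hzc : c ≤ z.im := hz.2
        have h1 : (0:ℝ) < c ^ 2 := by positivity
        exact inv_anti₀ h1 (by nlinarith)
    _ = ENNReal.ofReal ((c ^ 2)⁻¹) * volume K := setLIntegral_const _ _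
    _ ≤ ENNReal.ofReal ((c ^ 2)⁻¹) * volume (Metric.closedBall (v : ℂ) R) := by
        gcongr
        exact Set.inter_subset_left
    _ < ⊤ := ENNReal.mul_lt_top ENNReal.ofReal_lt_top measure_closedBall_lt_top

/-- The geodesic line is a closed subset of `ℍ`. -/
lemma geodLine_isClosed (q r : ℍ) : IsClosed (geodLine q r) := by
  have h1 : Continuous fun x : ℍ => dist q x := continuous_const.dist continuous_id
  have h2 : Continuous fun x : ℍ => dist x r := continuous_id.dist continuous_const
  have h3 : Continuous fun x : ℍ => dist r x := continuous_const.dist continuous_id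
  have h4 : Continuous fun x : ℍ => dist x q := continuous_id.dist continuous_const
  have : geodLine q r = ({x : ℍ | dist q x + dist x r = dist q r} ∪
      ({x : ℍ | dist q r + dist r x = dist q x} ∪ {x : ℍ | dist x q + dist q r = dist x r})) := by
    ext x; simp [geodLine, Set.mem_union, or_assoc]
  rw [this]
  exact ((isClosed_eq (h1.add h2) continuous_const).union
    ((isClosed_eq (continuous_const.add h3) h1).union
      (isClosed_eq (h4.add continuous_const) h2)))

/-- The hyperbolic area of the set of points within distance `b` of `v₁` that lie within
distance `d` of the geodesic line through `v₁` and `v₂` tends to `0` as `d → 0⁺`. -/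
theorem bad_region_area_tendsto_zero (v₁ v₂ : ℍ) (hne : v₁ ≠ v₂) (b : ℝ) (hb : 0 < b) :
    Tendsto
      (fun d : ℝ =>
        hypArea {p : ℍ | dist p v₁ ≤ b ∧ Metric.infDist p (geodLine v₁ v₂) ≤ d})
      (nhdsWithin 0 (Set.Ioi 0)) (nhds 0) := by
  set L : Set ℍ := geodLine v₁ v₂ with hL
  set S : ℝ → Set ℍ := fun d => {p : ℍ | dist p v₁ ≤ b ∧ Metric.infDist p L ≤ d} with hS
  have hclosed : ∀ d : ℝ, IsClosed (S d) := by
    intro d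
    have : S d = {p : ℍ | dist p v₁ ≤ b} ∩ {p : ℍ | Metric.infDist p L ≤ d} := rfl
    rw [this]
    exact (isClosed_le (continuous_id.dist continuous_const) continuous_const).inter
      (isClosed_le (Metric.continuous_infDist_pt L) continuous_const)
  have hmeas : ∀ d : ℝ, d > 0 → NullMeasurableSet (S d) hypArea := fun d _ =>
    ((hclosed d).measurableSet).nullMeasurableSet
  have hmono : ∀ i j : ℝ, 0 < i → i ≤ j → S i ⊆ S j := fun i j _ hij p hp =>
    ⟨hp.1, hp.2.trans hij⟩
  have hfin : ∃ r > (0:ℝ), hypArea (S r) ≠ ⊤ := by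
    refine ⟨1, one_pos, ?_⟩
    exact ne_top_of_le_ne_top (hypArea_ball_lt_top v₁ b).ne
      (measure_mono fun p hp => hp.1)
  have h := tendsto_measure_biInter_gt (μ := hypArea) hmeas hmono hfin
  have hLne : L.Nonempty := ⟨v₁, Or.inl (by simp)⟩
  have hint : hypArea (⋂ r > (0:ℝ), S r) = 0 := by
    refine measure_mono_null ?_ (hypArea_geodLine_zero v₁ v₂ hne)
    intro p hp
    simp only [Set.mem_iInter] at hp
    have h0 : Metric.infDist p L ≤ 0 := by
      by_contra hpos
      push_neg at hpos
      have := (hp (Metric.infDist p L / 2) (by linarith)).2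
      linarith
    have h0' : Metric.infDist p L = 0 := le_antisymm h0 Metric.infDist_nonneg
    exact ((geodLine_isClosed v₁ v₂).mem_iff_infDist_zero hLne).mpr h0'
  rw [hint] at h
  exact h
end
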